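/- Let T' be a finite tree and let 𝒫 be a finite nonempty family of paths in T' such that no two paths of 𝒫 are vertex-disjoint (every two paths of the family share at least one vertex). Then all paths in 𝒫 share a common vertex. -/

import Mathlib

open SimpleGraph Finset

variable {V : Type*}

/-- In a tree, `x` lies on the unique path between `u` and `v` iff
`dist u x + dist x v = dist u v`. -/
def onTreePath (G : SimpleGraph V) (u x v : V) : Prop :=
  G.dist u x + G.dist x v = G.dist u v

/-- The set of leaves (vertices of degree 1) of a graph. -/
def leafSet (G : SimpleGraph V) [Fintype V] [DecidableRel G.Adj] : Set V :=
  {v : V | G.degree v = 1}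

/-!
Root the tree at a vertex `r`. Every subtree `S` has a gate: its vertex `g S` nearest to `r`,
which lies on the path from `r` to each vertex of `S`. Among pairwise intersecting subtrees
take one, `S₀`, whose gate is farthest from `r`. For any other `S`, pick `x ∈ S₀ ∩ S`: both
gates lie on the path from `r` to `x`, and `g S` comes first, so `g S₀` lies on the path from
`g S` to `x`, which stays inside `S`. The paths of the family are subtrees.
-/

theorem onTreePath.symm {G : SimpleGraph V} {u x v : V} (h : onTreePath G u x v) :
    onTreePath G v x u := by
  unfold onTreePath at *
  simpa only [dist_comm, add_comm] using h

namespace SimpleGraph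

variable {G : SimpleGraph V} {r u v w x y z : V}

/-- In a tree these are exactly the vertex sets of subtrees. -/
def IsGeodesicallyConvex (G : SimpleGraph V) (S : Set V) : Prop :=
  ∀ ⦃y⦄, y ∈ S → ∀ ⦃z⦄, z ∈ S → ∀ ⦃x⦄, onTreePath G y x z → x ∈ S

lemma Walk.IsPath.append_of_support_inter {p : G.Walk u v} {q : G.Walk v w}
    (hp : p.IsPath) (hq : q.IsPath) (h : ∀ x ∈ p.support, x ∈ q.support → x = v) :
    (p.append q).IsPath := by
  have hq' := hq.support_nodup
  rw [← Walk.cons_tail_support] at hq'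
  rw [Walk.isPath_def, Walk.support_append]
  refine hp.support_nodup.append (List.nodup_cons.mp hq').2 fun x hxp hxq => ?_
  obtain rfl := h x hxp (List.mem_of_mem_tail hxq)
  exact (List.nodup_cons.mp hq').1 hxq

namespace IsTree

lemma length_eq_dist_of_isPath (hT : G.IsTree) {p : G.Walk u v} (hp : p.IsPath) :
    p.length = G.dist u v := by
  obtain ⟨q, hq, hql⟩ := hT.connected.exists_path_of_dist u v
  rwa [(hT.existsUnique_path u v).unique hp hq]

lemma onTreePath_of_mem_support (hT : G.IsTree) {p : G.Walk u v} (hp : p.IsPath)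
    (hx : x ∈ p.support) : onTreePath G u x v := by
  obtain ⟨q, s, hq, hs, rfl⟩ := hp.mem_support_iff_exists_append.mp hx
  rw [onTreePath, ← hT.length_eq_dist_of_isPath hq, ← hT.length_eq_dist_of_isPath hs,
    ← hT.length_eq_dist_of_isPath hp, Walk.length_append]

lemma mem_support_of_onTreePath (hT : G.IsTree) {p : G.Walk u v} (hp : p.IsPath)
    (hx : onTreePath G u x v) : x ∈ p.support := by
  obtain ⟨q, hq⟩ := hT.connected.exists_walk_length_eq_dist u x
  obtain ⟨s, hs⟩ := hT.connected.exists_walk_length_eq_dist x v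
  have hqs : (q.append s).IsPath :=
    (q.append s).isPath_of_length_eq_dist (by rw [Walk.length_append, hq, hs]; exact hx)
  rw [(hT.existsUnique_path u v).unique hp hqs, Walk.mem_support_append_iff]
  exact Or.inl q.end_mem_support

lemma onTreePath_of_dist_le (hT : G.IsTree) (hy : onTreePath G r y x)
    (hz : onTreePath G r z x) (hle : G.dist r y ≤ G.dist r z) : onTreePath G y z x := by
  obtain ⟨p, hp, -⟩ := hT.connected.exists_path_of_dist r x
  obtain ⟨q, s, hq, hs, rfl⟩ :=
    hp.mem_support_iff_exists_append.mp (hT.mem_support_of_onTreePath hp hy)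
  rcases (Walk.mem_support_append_iff _ _).mp (hT.mem_support_of_onTreePath hp hz) with hzq | hzs
  · have hrzy := hT.onTreePath_of_mem_support hq hzq
    unfold onTreePath at hrzy
    obtain rfl : z = y := hT.connected.dist_eq_zero_iff.mp (by omega)
    simp [onTreePath]
  · exact hT.onTreePath_of_mem_support hs hzs

lemma isGeodesicallyConvex_onTreePath (hT : G.IsTree) (a b : V) :
    G.IsGeodesicallyConvex {x | onTreePath G a x b} := by
  intro y hy z hz x hx
  wlog hle : G.dist a y ≤ G.dist a z generalizing y z
  · exact this hz hy hx.symm (by omega)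
  have hyzb := hT.onTreePath_of_dist_le hy hz hle
  have h₁ : G.dist a x ≤ G.dist a y + G.dist y x := hT.connected.dist_triangle
  have h₂ : G.dist x b ≤ G.dist x z + G.dist z b := hT.connected.dist_triangle
  have h₃ : G.dist a b ≤ G.dist a x + G.dist x b := hT.connected.dist_triangle
  simp only [onTreePath, Set.mem_ofPred_eq] at *
  omega

lemma onTreePath_of_isMinOn (hT : G.IsTree) {S : Set V} (hS : G.IsGeodesicallyConvex S)
    {m : V} (hm : m ∈ S) (hmin : IsMinOn (G.dist r) S m) (hx : x ∈ S) :
    onTreePath G r m x := by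
  obtain ⟨q, hq, -⟩ := hT.connected.exists_path_of_dist r m
  obtain ⟨s, hs, -⟩ := hT.connected.exists_path_of_dist m x
  have hqs : (q.append s).IsPath := hq.append_of_support_inter hs fun y hyq hys => by
    have hyS : y ∈ S := hS hm hx (hT.onTreePath_of_mem_support hs hys)
    have hrym := hT.onTreePath_of_mem_support hq hyq
    have hmy := isMinOn_iff.mp hmin y hyS
    unfold onTreePath at hrym
    exact hT.connected.dist_eq_zero_iff.mp (by omega)
  exact hT.onTreePath_of_mem_support hqs (by simp)

theorem exists_mem_of_pairwise_inter_nonempty (hT : G.IsTree) {ι : Type*} {s : Finset ι}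
    (hs : s.Nonempty) {S : ι → Set V} (hconv : ∀ i ∈ s, G.IsGeodesicallyConvex (S i))
    (hinter : ∀ i ∈ s, ∀ j ∈ s, (S i ∩ S j).Nonempty) :
    ∃ v, ∀ i ∈ s, v ∈ S i := by
  obtain ⟨i₀, hi₀⟩ := hs
  obtain ⟨r, -⟩ := hinter i₀ hi₀ i₀ hi₀
  have : Nonempty V := ⟨r⟩
  have hgate : ∀ i ∈ s, ∃ g ∈ S i, IsMinOn (G.dist r) (S i) g := fun i hi =>
    have hne := (hinter i hi i hi).mono Set.inter_subset_left
    ⟨_, Function.argminOn_mem _ _ hne,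
      isMinOn_iff.mpr fun _ hy => Function.argminOn_le _ _ hy⟩
  choose! g hgS hgmin using hgate
  obtain ⟨i₁, hi₁, hmax⟩ := s.exists_max_image (fun i => G.dist r (g i)) ⟨i₀, hi₀⟩
  refine ⟨g i₁, fun j hj => ?_⟩
  obtain ⟨x, hx₁, hxj⟩ := hinter i₁ hi₁ j hj
  have hg₁ := hT.onTreePath_of_isMinOn (hconv i₁ hi₁) (hgS i₁ hi₁) (hgmin i₁ hi₁) hx₁
  have hgj := hT.onTreePath_of_isMinOn (hconv j hj) (hgS j hj) (hgmin j hj) hxj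
  exact hconv j hj (hgS j hj) hxj (hT.onTreePath_of_dist_le hgj hg₁ (hmax j hj))

end IsTree

end SimpleGraph

theorem paths_common_vertex_general (G : SimpleGraph V) (hT : G.IsTree)
    (P : Finset (V × V)) (hne : P.Nonempty)
    (hint : ∀ p ∈ P, ∀ q ∈ P,
      ∃ x : V, onTreePath G p.1 x p.2 ∧ onTreePath G q.1 x q.2) :
    ∃ v : V, ∀ p ∈ P, onTreePath G p.1 v p.2 :=
  hT.exists_mem_of_pairwise_inter_nonempty (S := fun p => {x | onTreePath G p.1 x p.2}) hne
    (fun p _ => hT.isGeodesicallyConvex_onTreePath p.1 p.2) hint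

/-- **Helly property for paths in trees (Gyárfás–Lehel).** If a finite nonempty family of
paths in a tree contains no two vertex-disjoint paths, then all the paths share a common
vertex. Each path is given by its (ordered) pair of endpoints, and its vertex set is
the set of vertices on the unique path between them. -/
theorem paths_common_vertex [Fintype V] (G : SimpleGraph V) (hT : G.IsTree)
    (P : Finset (V × V)) (hne : P.Nonempty)
    (hint : ∀ p ∈ P, ∀ q ∈ P,
      ∃ x : V, onTreePath G p.1 x p.2 ∧ onTreePath G q.1 x q.2) :
    ∃ v : V, ∀ p ∈ P, onTreePath G p.1 v p.2 :=
  paths_common_vertex_general G hT P hne hint
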